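/- arXiv:1012.3202 — 3 statements merged into one kernel-verified Lean document; each statement's English description precedes it below -/
import Mathlib

section
/- For the GOY shell model bilinear operator B, there is a constant C > 0 such that |B(u, v)|_H ≤ C ‖u‖_V |v|_H for all u ∈ V and v ∈ H. -/
open Complex

/-- The wavenumbers k_n = k₀ · 2ⁿ. -/
noncomputable def kk (k₀ : ℝ) (n : ℕ) : ℝ := k₀ * 2 ^ n

/-- The GOY shell model bilinear operator.  Sequences are indexed by ℕ, with the
convention that the 0-th entry (and, via truncated subtraction, the entries with
negative index) vanish. -/
noncomputable def shellB (k₀ a b : ℝ) (u v : ℕ → ℂ) : ℕ → ℂ := fun n =>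
  if n = 0 then 0 else
    Complex.I * (((a * kk k₀ (n + 1) : ℝ) : ℂ) * (starRingEnd ℂ) (u (n + 1)) *
        (starRingEnd ℂ) (v (n + 2))
      + ((b * kk k₀ n : ℝ) : ℂ) * (starRingEnd ℂ) (u (n - 1)) * (starRingEnd ℂ) (v (n + 1))
      - ((a * kk k₀ (n - 1) : ℝ) : ℂ) * (starRingEnd ℂ) (u (n - 1)) *
        (starRingEnd ℂ) (v (n - 2))
      - ((b * kk k₀ (n - 1) : ℝ) : ℂ) * (starRingEnd ℂ) (u (n - 2)) *
        (starRingEnd ℂ) (v (n - 1)))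

set_option maxHeartbeats 1600000 in
/-- There is C > 0 with |B(u,v)|_H ≤ C ‖u‖_V |v|_H for u ∈ V, v ∈ H. -/
theorem stmt8 (k₀ a b : ℝ) (hk₀ : 1 < k₀) :
    ∃ C > (0 : ℝ), ∀ u v : ℕ → ℂ, u 0 = 0 → v 0 = 0 →
      Summable (fun n => (kk k₀ n) ^ 2 * ‖u n‖ ^ 2) → Summable (fun n => ‖v n‖ ^ 2) →
      Summable (fun n => ‖shellB k₀ a b u v n‖ ^ 2) ∧
      Real.sqrt (∑' n, ‖shellB k₀ a b u v n‖ ^ 2) ≤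
        C * Real.sqrt (∑' n, (kk k₀ n) ^ 2 * ‖u n‖ ^ 2) * Real.sqrt (∑' n, ‖v n‖ ^ 2) := by
  have hk0 : (0:ℝ) < k₀ := lt_trans one_pos hk₀
  set M : ℝ := 2 * (|a| + |b|) + 1 with hMdef
  have hM0 : (0:ℝ) < M := by positivity
  have hMa : |a| ≤ M := by nlinarith [abs_nonneg a, abs_nonneg b]
  have hMb : 2 * |b| ≤ M := by nlinarith [abs_nonneg a, abs_nonneg b]
  refine ⟨4 * M, by positivity, ?_⟩
  intro u v hu0 hv0 hSu hSv
  set Su := ∑' n, (kk k₀ n) ^ 2 * ‖u n‖ ^ 2 with hSudef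
  set Sv := ∑' n, ‖v n‖ ^ 2 with hSvdef
  have hSu0 : 0 ≤ Su := tsum_nonneg fun n => mul_nonneg (sq_nonneg _) (sq_nonneg _)
  have hSv0 : 0 ≤ Sv := tsum_nonneg fun n => by positivity
  have hkpos : ∀ m, 0 < kk k₀ m := fun m => by unfold kk; positivity
  have hksucc : ∀ m, kk k₀ (m + 1) = 2 * kk k₀ m := by
    intro m; unfold kk; ring
  -- pointwise kk m * ‖u m‖ ≤ sqrt Su
  have hku : ∀ m, kk k₀ m * ‖u m‖ ≤ Real.sqrt Su := by
    intro m
    have h1 : (kk k₀ m) ^ 2 * ‖u m‖ ^ 2 ≤ Su :=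
      Summable.le_tsum hSu m fun i _ => mul_nonneg (sq_nonneg _) (sq_nonneg _)
    have h2 : kk k₀ m * ‖u m‖ = Real.sqrt ((kk k₀ m) ^ 2 * ‖u m‖ ^ 2) := by
      rw [← mul_pow, Real.sqrt_sq (mul_nonneg (hkpos m).le (norm_nonneg _))]
    rw [h2]
    exact Real.sqrt_le_sqrt h1
  have hsq : 0 ≤ Real.sqrt Su := Real.sqrt_nonneg _
  -- pointwise bound on shellB
  have hpt : ∀ n, ‖shellB k₀ a b u v n‖ ≤
      M * Real.sqrt Su * (‖v (n+2)‖ + ‖v (n+1)‖ + ‖v (n-2)‖ + ‖v (n-1)‖) := by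
    intro n
    rcases Nat.eq_zero_or_pos n with h0 | h1
    · subst h0
      have hz : shellB k₀ a b u v 0 = 0 := by simp [shellB]
      rw [hz, norm_zero]
      have : 0 ≤ ‖v (0+2)‖ + ‖v (0+1)‖ + ‖v (0-2)‖ + ‖v (0-1)‖ := by positivity
      exact mul_nonneg (mul_nonneg hM0.le hsq) this
    · have hne : n ≠ 0 := Nat.pos_iff_ne_zero.mp h1
      simp only [shellB, if_neg hne]
      rw [norm_mul, Complex.norm_I, one_mul]
      have habs : ∀ (r : ℝ) (x y : ℂ),
          ‖((r:ℂ)) * (starRingEnd ℂ) x * (starRingEnd ℂ) y‖ = |r| * ‖x‖ * ‖y‖ := by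
        intro r x y
        simp [norm_mul, Complex.norm_real, RCLike.norm_conj, Real.norm_eq_abs]
      -- term bounds
      have hA : ‖((a * kk k₀ (n + 1) : ℝ) : ℂ) * (starRingEnd ℂ) (u (n + 1)) *
          (starRingEnd ℂ) (v (n + 2))‖ ≤ M * Real.sqrt Su * ‖v (n+2)‖ := by
        rw [habs]
        have : |a * kk k₀ (n+1)| = |a| * kk k₀ (n+1) := by
          rw [abs_mul, abs_of_pos (hkpos _)]
        rw [this]
        have h := hku (n+1)
        have hv2 : 0 ≤ ‖v (n+2)‖ := norm_nonneg _
        calc |a| * kk k₀ (n+1) * ‖u (n+1)‖ * ‖v (n+2)‖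
            = |a| * (kk k₀ (n+1) * ‖u (n+1)‖) * ‖v (n+2)‖ := by ring
          _ ≤ M * Real.sqrt Su * ‖v (n+2)‖ := by
              apply mul_le_mul_of_nonneg_right _ hv2
              exact mul_le_mul hMa h (mul_nonneg (hkpos _).le (norm_nonneg _)) (le_of_lt hM0)
      have hB : ‖((b * kk k₀ n : ℝ) : ℂ) * (starRingEnd ℂ) (u (n - 1)) *
          (starRingEnd ℂ) (v (n + 1))‖ ≤ M * Real.sqrt Su * ‖v (n+1)‖ := by
        rw [habs]
        have hn : n = (n-1) + 1 := (Nat.succ_pred_eq_of_pos h1).symm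
        have hkk : kk k₀ n = 2 * kk k₀ (n-1) := by rw [hn, hksucc]; rw [← hn]
        have : |b * kk k₀ n| = |b| * (2 * kk k₀ (n-1)) := by
          rw [abs_mul, abs_of_pos (hkpos _), hkk]
        rw [this]
        have h := hku (n-1)
        have hv2 : 0 ≤ ‖v (n+1)‖ := norm_nonneg _
        calc |b| * (2 * kk k₀ (n-1)) * ‖u (n-1)‖ * ‖v (n+1)‖
            = (2 * |b|) * (kk k₀ (n-1) * ‖u (n-1)‖) * ‖v (n+1)‖ := by ring
          _ ≤ M * Real.sqrt Su * ‖v (n+1)‖ := by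
              apply mul_le_mul_of_nonneg_right _ hv2
              exact mul_le_mul hMb h (mul_nonneg (hkpos _).le (norm_nonneg _)) (le_of_lt hM0)
      have hC : ‖((a * kk k₀ (n - 1) : ℝ) : ℂ) * (starRingEnd ℂ) (u (n - 1)) *
          (starRingEnd ℂ) (v (n - 2))‖ ≤ M * Real.sqrt Su * ‖v (n-2)‖ := by
        rw [habs]
        have : |a * kk k₀ (n-1)| = |a| * kk k₀ (n-1) := by
          rw [abs_mul, abs_of_pos (hkpos _)]
        rw [this]
        have h := hku (n-1)
        have hv2 : 0 ≤ ‖v (n-2)‖ := norm_nonneg _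
        calc |a| * kk k₀ (n-1) * ‖u (n-1)‖ * ‖v (n-2)‖
            = |a| * (kk k₀ (n-1) * ‖u (n-1)‖) * ‖v (n-2)‖ := by ring
          _ ≤ M * Real.sqrt Su * ‖v (n-2)‖ := by
              apply mul_le_mul_of_nonneg_right _ hv2
              exact mul_le_mul hMa h (mul_nonneg (hkpos _).le (norm_nonneg _)) (le_of_lt hM0)
      have hD : ‖((b * kk k₀ (n - 1) : ℝ) : ℂ) * (starRingEnd ℂ) (u (n - 2)) *
          (starRingEnd ℂ) (v (n - 1))‖ ≤ M * Real.sqrt Su * ‖v (n-1)‖ := by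
        rw [habs]
        rcases Nat.lt_or_ge n 2 with h2 | h2
        · -- n = 1, u (n-2) = u 0 = 0
          interval_cases n
          · simp only [show (1:ℕ)-2 = 0 from rfl, hu0, norm_zero, mul_zero, zero_mul]
            exact mul_nonneg (mul_nonneg hM0.le hsq) (norm_nonneg _)
        · have hn : n - 1 = (n-2) + 1 := by omega
          have hkk : kk k₀ (n-1) = 2 * kk k₀ (n-2) := by rw [hn, hksucc]
          have : |b * kk k₀ (n-1)| = |b| * (2 * kk k₀ (n-2)) := by
            rw [abs_mul, abs_of_pos (hkpos _), hkk]
          rw [this]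
          have h := hku (n-2)
          have hv2 : 0 ≤ ‖v (n-1)‖ := norm_nonneg _
          calc |b| * (2 * kk k₀ (n-2)) * ‖u (n-2)‖ * ‖v (n-1)‖
              = (2 * |b|) * (kk k₀ (n-2) * ‖u (n-2)‖) * ‖v (n-1)‖ := by ring
            _ ≤ M * Real.sqrt Su * ‖v (n-1)‖ := by
                apply mul_le_mul_of_nonneg_right _ hv2
                exact mul_le_mul hMb h (mul_nonneg (hkpos _).le (norm_nonneg _)) (le_of_lt hM0)
      calc ‖((a * kk k₀ (n + 1) : ℝ) : ℂ) * (starRingEnd ℂ) (u (n + 1)) *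
            (starRingEnd ℂ) (v (n + 2))
          + ((b * kk k₀ n : ℝ) : ℂ) * (starRingEnd ℂ) (u (n - 1)) * (starRingEnd ℂ) (v (n + 1))
          - ((a * kk k₀ (n - 1) : ℝ) : ℂ) * (starRingEnd ℂ) (u (n - 1)) *
            (starRingEnd ℂ) (v (n - 2))
          - ((b * kk k₀ (n - 1) : ℝ) : ℂ) * (starRingEnd ℂ) (u (n - 2)) *
            (starRingEnd ℂ) (v (n - 1))‖
          ≤ ‖((a * kk k₀ (n + 1) : ℝ) : ℂ) * (starRingEnd ℂ) (u (n + 1)) *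
            (starRingEnd ℂ) (v (n + 2))‖
          + ‖((b * kk k₀ n : ℝ) : ℂ) * (starRingEnd ℂ) (u (n - 1)) *
            (starRingEnd ℂ) (v (n + 1))‖
          + ‖((a * kk k₀ (n - 1) : ℝ) : ℂ) * (starRingEnd ℂ) (u (n - 1)) *
            (starRingEnd ℂ) (v (n - 2))‖
          + ‖((b * kk k₀ (n - 1) : ℝ) : ℂ) * (starRingEnd ℂ) (u (n - 2)) *
            (starRingEnd ℂ) (v (n - 1))‖ := by
            refine le_trans (norm_sub_le _ _) ?_
            refine add_le_add ?_ le_rfl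
            refine le_trans (norm_sub_le _ _) ?_
            exact add_le_add (norm_add_le _ _) le_rfl
        _ ≤ M * Real.sqrt Su * (‖v (n+2)‖ + ‖v (n+1)‖ + ‖v (n-2)‖ + ‖v (n-1)‖) := by
            have := add_le_add (add_le_add (add_le_add hA hB) hC) hD
            linarith [this]
  -- squared pointwise bound
  set F : ℕ → ℝ := fun n => ‖v (n+2)‖^2 + ‖v (n+1)‖^2 + ‖v (n-2)‖^2 + ‖v (n-1)‖^2 with hFdef
  have hpt2 : ∀ n, ‖shellB k₀ a b u v n‖ ^ 2 ≤ 4 * M^2 * Su * F n := by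
    intro n
    have h := hpt n
    have h0 : 0 ≤ ‖shellB k₀ a b u v n‖ := norm_nonneg _
    have hs : ‖shellB k₀ a b u v n‖ ^ 2 ≤
        (M * Real.sqrt Su * (‖v (n+2)‖ + ‖v (n+1)‖ + ‖v (n-2)‖ + ‖v (n-1)‖)) ^ 2 :=
      pow_le_pow_left₀ h0 h 2
    have hsqsq : Real.sqrt Su ^ 2 = Su := Real.sq_sqrt hSu0
    have key : (M * Real.sqrt Su * (‖v (n+2)‖ + ‖v (n+1)‖ + ‖v (n-2)‖ + ‖v (n-1)‖)) ^ 2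
        ≤ 4 * M^2 * Su * F n := by
      have hq : (‖v (n+2)‖ + ‖v (n+1)‖ + ‖v (n-2)‖ + ‖v (n-1)‖) ^ 2 ≤ 4 * F n := by
        simp only [hFdef]
        nlinarith [sq_nonneg (‖v (n+2)‖ - ‖v (n+1)‖), sq_nonneg (‖v (n+2)‖ - ‖v (n-2)‖),
          sq_nonneg (‖v (n+2)‖ - ‖v (n-1)‖), sq_nonneg (‖v (n+1)‖ - ‖v (n-2)‖),
          sq_nonneg (‖v (n+1)‖ - ‖v (n-1)‖), sq_nonneg (‖v (n-2)‖ - ‖v (n-1)‖)]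
      calc (M * Real.sqrt Su * (‖v (n+2)‖ + ‖v (n+1)‖ + ‖v (n-2)‖ + ‖v (n-1)‖)) ^ 2
          = M^2 * Su * (‖v (n+2)‖ + ‖v (n+1)‖ + ‖v (n-2)‖ + ‖v (n-1)‖) ^ 2 := by
            rw [mul_pow, mul_pow, hsqsq]
        _ ≤ M^2 * Su * (4 * F n) := by
            apply mul_le_mul_of_nonneg_left hq (mul_nonneg (sq_nonneg M) hSu0)
        _ = 4 * M^2 * Su * F n := by ring
    linarith
  -- summability of shifted sequences
  have hs2 : Summable (fun n => ‖v (n+2)‖^2) := (summable_nat_add_iff 2).mpr hSv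
  have hs1 : Summable (fun n => ‖v (n+1)‖^2) := (summable_nat_add_iff 1).mpr hSv
  have hsm2 : Summable (fun n => ‖v (n-2)‖^2) := by
    rw [← summable_nat_add_iff 2]
    simpa using hSv
  have hsm1 : Summable (fun n => ‖v (n-1)‖^2) := by
    rw [← summable_nat_add_iff 1]
    simpa using hSv
  have hF : Summable F := ((hs2.add hs1).add hsm2).add hsm1
  -- tsum bounds for shifted sequences
  have ht2 : ∑' n, ‖v (n+2)‖^2 ≤ Sv := by
    have := (Summable.sum_add_tsum_nat_add 2 hSv).symm
    rw [hSvdef]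
    have hnn : 0 ≤ ∑ i ∈ Finset.range 2, ‖v i‖^2 :=
      Finset.sum_nonneg fun i _ => by positivity
    linarith [this]
  have ht1 : ∑' n, ‖v (n+1)‖^2 ≤ Sv := by
    have := (Summable.sum_add_tsum_nat_add 1 hSv).symm
    rw [hSvdef]
    have hnn : 0 ≤ ∑ i ∈ Finset.range 1, ‖v i‖^2 :=
      Finset.sum_nonneg fun i _ => by positivity
    linarith [this]
  have htm2 : ∑' n, ‖v (n-2)‖^2 ≤ Sv := by
    have h := Summable.sum_add_tsum_nat_add (f := fun n => ‖v (n-2)‖^2) 2 hsm2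
    have he : (∑ i ∈ Finset.range 2, ‖v (i-2)‖^2) = 0 := by
      simp [Finset.sum_range_succ, hv0]
    have he2 : (∑' n, ‖v ((n+2)-2)‖^2) = Sv := by
      rw [hSvdef]; norm_num
    rw [he, zero_add] at h
    rw [← h, he2]
  have htm1 : ∑' n, ‖v (n-1)‖^2 ≤ Sv := by
    have h := Summable.sum_add_tsum_nat_add (f := fun n => ‖v (n-1)‖^2) 1 hsm1
    have he : (∑ i ∈ Finset.range 1, ‖v (i-1)‖^2) = 0 := by
      simp [hv0]
    have he2 : (∑' n, ‖v ((n+1)-1)‖^2) = Sv := by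
      rw [hSvdef]; norm_num
    rw [he, zero_add] at h
    rw [← h, he2]
  have htF : ∑' n, F n ≤ 4 * Sv := by
    have : ∑' n, F n = (∑' n, ‖v (n+2)‖^2) + (∑' n, ‖v (n+1)‖^2)
        + (∑' n, ‖v (n-2)‖^2) + (∑' n, ‖v (n-1)‖^2) := by
      simp only [hFdef]
      rw [Summable.tsum_add ((hs2.add hs1).add hsm2) hsm1, Summable.tsum_add (hs2.add hs1) hsm2,
        Summable.tsum_add hs2 hs1]
    rw [this]
    linarith
  -- summability of the main series
  have hBsum : Summable (fun n => ‖shellB k₀ a b u v n‖ ^ 2) := by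
    apply Summable.of_nonneg_of_le (fun n => by positivity) hpt2
    exact hF.mul_left _
  refine ⟨hBsum, ?_⟩
  have htB : ∑' n, ‖shellB k₀ a b u v n‖ ^ 2 ≤ 4 * M^2 * Su * (4 * Sv) := by
    calc ∑' n, ‖shellB k₀ a b u v n‖ ^ 2 ≤ ∑' n, 4 * M^2 * Su * F n :=
          Summable.tsum_le_tsum hpt2 hBsum (hF.mul_left _)
      _ = 4 * M^2 * Su * ∑' n, F n := by rw [tsum_mul_left]
      _ ≤ 4 * M^2 * Su * (4 * Sv) := by
          apply mul_le_mul_of_nonneg_left htF (mul_nonneg (by positivity) hSu0)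
  have hfin : (4 * M^2 * Su * (4 * Sv)) = (4*M)^2 * (Su * Sv) := by ring
  calc Real.sqrt (∑' n, ‖shellB k₀ a b u v n‖ ^ 2)
      ≤ Real.sqrt ((4*M)^2 * (Su * Sv)) := by
        rw [← hfin]; exact Real.sqrt_le_sqrt htB
    _ = 4 * M * Real.sqrt Su * Real.sqrt Sv := by
        rw [Real.sqrt_mul (sq_nonneg _), Real.sqrt_sq (by linarith : (0:ℝ) ≤ 4*M),
          Real.sqrt_mul hSu0, mul_assoc]
        ring
end

section
/- For the GOY shell model bilinear operator B and all u ∈ H, v ∈ V: (B(v, u), u) = 0, where (·,·) is the real inner product on H. -/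
open Complex

private lemma sumMul {f g : ℕ → ℝ} (hf : Summable (fun n => f n ^ 2))
    (hg : Summable (fun n => g n ^ 2)) (hf0 : ∀ n, 0 ≤ f n) (hg0 : ∀ n, 0 ≤ g n) :
    Summable (fun n => f n * g n) := by
  refine Summable.of_nonneg_of_le (fun n => mul_nonneg (hf0 n) (hg0 n)) (fun n => ?_)
    ((hf.add hg).div_const 2)
  nlinarith [sq_nonneg (f n - g n)]

private lemma sumShift {s : ℕ → ℝ} (hs : Summable s) : Summable (fun n => s (n - 1)) :=
  (summable_nat_add_iff 1).mp hs

set_option maxHeartbeats 2000000 in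
/-- For the GOY operator, (B(v,u), u) = 0 for u ∈ H and v ∈ V, where
(x,y) = Re Σ xₙ yₙ* is the real inner product of H. -/
theorem stmt9 (k₀ a b : ℝ) (hk₀ : 1 < k₀) (u v : ℕ → ℂ) (hu0 : u 0 = 0) (hv0 : v 0 = 0)
    (hu : Summable (fun n => ‖u n‖ ^ 2))
    (hv : Summable (fun n => (kk k₀ n) ^ 2 * ‖v n‖ ^ 2)) :
    Summable (fun n => shellB k₀ a b v u n * (starRingEnd ℂ) (u n)) ∧
    (∑' n, shellB k₀ a b v u n * (starRingEnd ℂ) (u n)).re = 0 := by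
  have hk0' : (0:ℝ) < k₀ := lt_trans one_pos hk₀
  have hkpos : ∀ n, (0:ℝ) < kk k₀ n := fun n => by
    unfold kk; positivity
  -- uniform bound on u
  set M : ℝ := Real.sqrt (∑' n, ‖u n‖ ^ 2) with hMdef
  have hM0 : 0 ≤ M := Real.sqrt_nonneg _
  have hub : ∀ n, ‖u n‖ ≤ M := by
    intro n
    have h1 : ‖u n‖ ^ 2 ≤ ∑' n, ‖u n‖ ^ 2 := Summable.le_tsum hu n (fun j _ => sq_nonneg _)
    have := Real.sqrt_le_sqrt h1
    rwa [Real.sqrt_sq (norm_nonneg _)] at this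
  set P : ℕ → ℝ := fun n => kk k₀ n * ‖v n‖ with hPdef
  set Q : ℕ → ℝ := fun n => ‖u n‖ with hQdef
  have hPnn : ∀ n, 0 ≤ P n := fun n => mul_nonneg (hkpos n).le (norm_nonneg _)
  have hQnn : ∀ n, 0 ≤ Q n := fun n => norm_nonneg _
  have hP : Summable (fun n => P n ^ 2) := by simpa [hPdef, mul_pow] using hv
  have hQ : Summable (fun n => Q n ^ 2) := hu
  have hP1 : Summable (fun n => P (n + 1) ^ 2) := (summable_nat_add_iff 1).mpr hP
  have hPm1 : Summable (fun n => P (n - 1) ^ 2) := sumShift hP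
  have hPm2 : Summable (fun n => P (n - 2) ^ 2) := by
    have := sumShift (sumShift hP)
    simpa [Nat.sub_sub] using this
  -- the four component sequences
  set t1 : ℕ → ℂ := fun n => ((a * kk k₀ (n + 1) : ℝ) : ℂ) * v (n + 1) * u (n + 2) * u n
    with ht1def
  set t2 : ℕ → ℂ := fun n => ((b * kk k₀ n : ℝ) : ℂ) * v (n - 1) * u (n + 1) * u n
    with ht2def
  set t3 : ℕ → ℂ := fun n => ((a * kk k₀ (n - 1) : ℝ) : ℂ) * v (n - 1) * u (n - 2) * u n
    with ht3def
  set t4 : ℕ → ℂ := fun n => ((b * kk k₀ (n - 1) : ℝ) : ℂ) * v (n - 2) * u (n - 1) * u n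
    with ht4def
  have ht1 : Summable t1 := by
    refine Summable.of_norm_bounded (g := fun n => (|a| * M) * (P (n + 1) * Q n))
      ((sumMul hP1 hQ (fun n => hPnn _) hQnn).mul_left _) (fun n => ?_)
    simp only [ht1def, norm_mul, Complex.norm_real, Real.norm_eq_abs, abs_mul,
      abs_of_pos (hkpos (n + 1))]
    simp only [hPdef, hQdef]
    have key : 0 ≤ |a| * kk k₀ (n + 1) * ‖v (n + 1)‖ * ‖u n‖ * (M - ‖u (n + 2)‖) :=
      mul_nonneg (mul_nonneg (mul_nonneg (mul_nonneg (abs_nonneg a) (hkpos _).le)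
        (norm_nonneg _)) (norm_nonneg _)) (sub_nonneg.mpr (hub _))
    nlinarith [key]
  have ht2 : Summable t2 := by
    refine Summable.of_norm_bounded (g := fun n => (|b| * (2 * M)) * (P (n - 1) * Q n))
      ((sumMul hPm1 hQ (fun n => hPnn _) hQnn).mul_left _) (fun n => ?_)
    match n with
    | 0 =>
      have h0 : t2 0 = 0 := by simp [ht2def, hv0]
      rw [h0, norm_zero]
      exact mul_nonneg (by positivity) (mul_nonneg (hPnn _) (hQnn _))
    | (m + 1) =>
      have hkk : kk k₀ (m + 1) = 2 * kk k₀ m := by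
        unfold kk; ring
      simp only [ht2def, norm_mul, Complex.norm_real, Real.norm_eq_abs, abs_mul,
        Nat.add_sub_cancel, hkk, abs_of_pos (hkpos m), _root_.abs_two]
      simp only [hPdef, hQdef]
      have key : 0 ≤ |b| * 2 * kk k₀ m * ‖v m‖ * ‖u (m + 1)‖ * (M - ‖u (m + 1 + 1)‖) :=
        mul_nonneg (mul_nonneg (mul_nonneg (mul_nonneg (mul_nonneg (abs_nonneg b)
          (by norm_num)) (hkpos _).le) (norm_nonneg _)) (norm_nonneg _))
          (sub_nonneg.mpr (hub _))
      nlinarith [key]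
  have ht3 : Summable t3 := by
    refine Summable.of_norm_bounded (g := fun n => (|a| * M) * (P (n - 1) * Q n))
      ((sumMul hPm1 hQ (fun n => hPnn _) hQnn).mul_left _) (fun n => ?_)
    simp only [ht3def, norm_mul, Complex.norm_real, Real.norm_eq_abs, abs_mul,
      abs_of_pos (hkpos (n - 1))]
    simp only [hPdef, hQdef]
    have key : 0 ≤ |a| * kk k₀ (n - 1) * ‖v (n - 1)‖ * ‖u n‖ * (M - ‖u (n - 2)‖) :=
      mul_nonneg (mul_nonneg (mul_nonneg (mul_nonneg (abs_nonneg a) (hkpos _).le)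
        (norm_nonneg _)) (norm_nonneg _)) (sub_nonneg.mpr (hub _))
    nlinarith [key]
  have ht4 : Summable t4 := by
    refine Summable.of_norm_bounded (g := fun n => (|b| * (2 * M)) * (P (n - 2) * Q n))
      ((sumMul hPm2 hQ (fun n => hPnn _) hQnn).mul_left _) (fun n => ?_)
    match n with
    | 0 =>
      have h0 : t4 0 = 0 := by simp [ht4def, hv0]
      rw [h0, norm_zero]
      exact mul_nonneg (by positivity) (mul_nonneg (hPnn _) (hQnn _))
    | 1 =>
      have h0 : t4 1 = 0 := by simp [ht4def, hv0]
      rw [h0, norm_zero]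
      exact mul_nonneg (by positivity) (mul_nonneg (hPnn _) (hQnn _))
    | (m + 2) =>
      have hkk : kk k₀ (m + 1) = 2 * kk k₀ m := by
        unfold kk; ring
      have e1 : m + 2 - 1 = m + 1 := rfl
      have e2 : m + 2 - 2 = m := rfl
      simp only [ht4def, norm_mul, Complex.norm_real, Real.norm_eq_abs, abs_mul,
        e1, e2, hkk, abs_of_pos (hkpos m), _root_.abs_two]
      simp only [hPdef, hQdef]
      have key : 0 ≤ |b| * 2 * kk k₀ m * ‖v m‖ * ‖u (m + 2)‖ * (M - ‖u (m + 1)‖) :=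
        mul_nonneg (mul_nonneg (mul_nonneg (mul_nonneg (mul_nonneg (abs_nonneg b)
          (by norm_num)) (hkpos _).le) (norm_nonneg _)) (norm_nonneg _))
          (sub_nonneg.mpr (hub _))
      nlinarith [key]
  have hg : Summable (fun n => t1 n + t2 n - t3 n - t4 n) := ((ht1.add ht2).sub ht3).sub ht4
  -- the key pointwise identity
  have hfg : ∀ n, shellB k₀ a b v u n * (starRingEnd ℂ) (u n)
      = Complex.I * (starRingEnd ℂ) (t1 n + t2 n - t3 n - t4 n) := by
    intro n
    match n with
    | 0 =>
      simp [shellB, ht1def, ht2def, ht3def, ht4def, hu0, hv0]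
    | (m + 1) =>
      simp only [shellB, ht1def, ht2def, ht3def, ht4def, Nat.succ_ne_zero, if_false,
        map_add, map_sub, map_mul, Complex.conj_conj, Complex.conj_ofReal]
      ring
  -- the telescoping identities
  have h31 : ∑' n, t3 n = ∑' n, t1 n := by
    rw [Summable.tsum_eq_zero_add ht3, Summable.tsum_eq_zero_add ((summable_nat_add_iff 1).mpr ht3)]
    have e0 : t3 0 = 0 := by simp [ht3def, hv0]
    have e1 : t3 1 = 0 := by simp [ht3def, hv0]
    have e2 : ∀ n, t3 (n + 1 + 1) = t1 n := by
      intro n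
      show ((a * kk k₀ (n + 1) : ℝ) : ℂ) * v (n + 1) * u n * u (n + 2) = _
      simp only [ht1def]; ring
    simp [e0, e1, e2]
  have h42 : ∑' n, t4 n = ∑' n, t2 n := by
    rw [Summable.tsum_eq_zero_add ht4]
    have e0 : t4 0 = 0 := by simp [ht4def, hv0]
    have e2 : ∀ n, t4 (n + 1) = t2 n := by
      intro n
      show ((b * kk k₀ n : ℝ) : ℂ) * v (n - 1) * u n * u (n + 1) = _
      simp only [ht2def]; ring
    simp [e0, e2]
  have hgsum : ∑' n, (t1 n + t2 n - t3 n - t4 n) = 0 := by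
    rw [Summable.tsum_sub ((ht1.add ht2).sub ht3) ht4, Summable.tsum_sub (ht1.add ht2) ht3,
      Summable.tsum_add ht1 ht2, h31, h42]
    ring
  constructor
  · refine Summable.congr ?_ (fun n => (hfg n).symm)
    exact (hg.map (starRingEnd ℂ) Complex.continuous_conj).mul_left Complex.I
  · have : ∑' n, shellB k₀ a b v u n * (starRingEnd ℂ) (u n)
        = Complex.I * (starRingEnd ℂ) (∑' n, (t1 n + t2 n - t3 n - t4 n)) := by
      rw [tsum_congr hfg, tsum_mul_left]
      congr 1
      exact tsum_star.symm
    rw [this, hgsum]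
    simp
end

section
/- For the GOY shell model bilinear operator B there exists C > 0 such that for all u, v ∈ H and w ∈ V: |⟨B(u,v), w⟩_{V',V}| + |(B(u,w), v)| + |(B(w,u), v)| ≤ C |u|_H |v|_H ‖w‖_V. -/
open Complex

lemma kk_nonneg {k₀ : ℝ} (hk : 0 < k₀) (n : ℕ) : 0 ≤ kk k₀ n := by
  unfold kk; positivity

lemma kk_succ (k₀ : ℝ) (n : ℕ) : kk k₀ (n + 1) = 2 * kk k₀ n := by
  unfold kk; ring

lemma kk_le_two_mul_pred {k₀ : ℝ} (hk : 0 < k₀) (n : ℕ) : kk k₀ n ≤ 2 * kk k₀ (n - 1) := by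
  cases n with
  | zero => simp; nlinarith [kk_nonneg hk 0]
  | succ m => simp [kk_succ]

lemma kk_pred_le {k₀ : ℝ} (hk : 0 < k₀) (n : ℕ) : kk k₀ (n - 1) ≤ kk k₀ n := by
  cases n with
  | zero => exact le_refl _
  | succ m => simp [kk_succ]; nlinarith [kk_nonneg hk m]

lemma kk_mono {k₀ : ℝ} (hk : 0 < k₀) {m n : ℕ} (h : m ≤ n) : kk k₀ m ≤ kk k₀ n := by
  unfold kk
  have : (2:ℝ) ^ m ≤ 2 ^ n := pow_le_pow_right₀ (by norm_num) h
  nlinarith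

-- Cauchy–Schwarz for tsums, nonneg sequences
lemma cs2_summable {f g : ℕ → ℝ} (hf0 : ∀ n, 0 ≤ f n) (hg0 : ∀ n, 0 ≤ g n)
    (hf : Summable fun n => f n ^ 2) (hg : Summable fun n => g n ^ 2) :
    Summable fun n => f n * g n := by
  apply Summable.of_nonneg_of_le (fun n => mul_nonneg (hf0 n) (hg0 n))
    (fun n => ?_) ((hf.add hg).mul_left (1/2 : ℝ))
  have h := sq_nonneg (f n - g n)
  nlinarith

lemma cs2 {f g : ℕ → ℝ} (hf0 : ∀ n, 0 ≤ f n) (hg0 : ∀ n, 0 ≤ g n)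
    (hf : Summable fun n => f n ^ 2) (hg : Summable fun n => g n ^ 2) :
    ∑' n, f n * g n ≤ Real.sqrt (∑' n, f n ^ 2) * Real.sqrt (∑' n, g n ^ 2) := by
  apply Summable.tsum_le_of_sum_le (cs2_summable hf0 hg0 hf hg)
  intro s
  calc ∑ i ∈ s, f i * g i
      ≤ Real.sqrt (∑ i ∈ s, f i ^ 2) * Real.sqrt (∑ i ∈ s, g i ^ 2) :=
        Real.sum_mul_le_sqrt_mul_sqrt s f g
    _ ≤ Real.sqrt (∑' n, f n ^ 2) * Real.sqrt (∑' n, g n ^ 2) := by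
        apply mul_le_mul (Real.sqrt_le_sqrt ?_) (Real.sqrt_le_sqrt ?_)
          (Real.sqrt_nonneg _) (Real.sqrt_nonneg _)
        · exact Summable.sum_le_tsum s (fun i _ => sq_nonneg _) hf
        · exact Summable.sum_le_tsum s (fun i _ => sq_nonneg _) hg

lemma le_sqrt_tsum {h : ℕ → ℝ} (hh0 : ∀ n, 0 ≤ h n)
    (hh : Summable fun n => h n ^ 2) (n : ℕ) : h n ≤ Real.sqrt (∑' m, h m ^ 2) := by
  have h1 : h n ^ 2 ≤ ∑' m, h m ^ 2 := Summable.le_tsum hh n (fun j _ => sq_nonneg _)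
  have := Real.sqrt_le_sqrt h1
  rwa [Real.sqrt_sq (hh0 n)] at this

lemma cs3_summable {f g h : ℕ → ℝ} (hf0 : ∀ n, 0 ≤ f n) (hg0 : ∀ n, 0 ≤ g n)
    (hh0 : ∀ n, 0 ≤ h n) (hf : Summable fun n => f n ^ 2) (hg : Summable fun n => g n ^ 2)
    (hh : Summable fun n => h n ^ 2) : Summable fun n => f n * g n * h n := by
  apply Summable.of_nonneg_of_le
    (fun n => mul_nonneg (mul_nonneg (hf0 n) (hg0 n)) (hh0 n))
    (fun n => ?_) ((cs2_summable hf0 hg0 hf hg).mul_right (Real.sqrt (∑' m, h m ^ 2)))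
  exact mul_le_mul_of_nonneg_left (le_sqrt_tsum hh0 hh n)
    (mul_nonneg (hf0 n) (hg0 n))

lemma cs3 {f g h : ℕ → ℝ} (hf0 : ∀ n, 0 ≤ f n) (hg0 : ∀ n, 0 ≤ g n)
    (hh0 : ∀ n, 0 ≤ h n) (hf : Summable fun n => f n ^ 2) (hg : Summable fun n => g n ^ 2)
    (hh : Summable fun n => h n ^ 2) :
    ∑' n, f n * g n * h n ≤
      Real.sqrt (∑' n, f n ^ 2) * Real.sqrt (∑' n, g n ^ 2) * Real.sqrt (∑' n, h n ^ 2) := by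
  calc ∑' n, f n * g n * h n
      ≤ ∑' n, f n * g n * Real.sqrt (∑' m, h m ^ 2) := by
        apply Summable.tsum_le_tsum (fun n => mul_le_mul_of_nonneg_left (le_sqrt_tsum hh0 hh n)
          (mul_nonneg (hf0 n) (hg0 n))) (cs3_summable hf0 hg0 hh0 hf hg hh)
          ((cs2_summable hf0 hg0 hf hg).mul_right _)
    _ = (∑' n, f n * g n) * Real.sqrt (∑' m, h m ^ 2) := tsum_mul_right
    _ ≤ _ := mul_le_mul_of_nonneg_right (cs2 hf0 hg0 hf hg) (Real.sqrt_nonneg _)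

lemma shift_add_summable {f : ℕ → ℝ} (hf : Summable fun n => f n ^ 2) (k : ℕ) :
    Summable fun n => f (n + k) ^ 2 := (summable_nat_add_iff k).2 hf

lemma shift_add_tsum_le {f : ℕ → ℝ} (hf : Summable fun n => f n ^ 2) (k : ℕ) :
    ∑' n, f (n + k) ^ 2 ≤ ∑' n, f n ^ 2 := by
  have h := Summable.sum_add_tsum_nat_add (f := fun n => f n ^ 2) k hf
  have h2 : 0 ≤ ∑ i ∈ Finset.range k, f i ^ 2 := Finset.sum_nonneg fun i _ => sq_nonneg _
  linarith

lemma shift_sub_summable {f : ℕ → ℝ} (hf : Summable fun n => f n ^ 2) (k : ℕ) :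
    Summable fun n => f (n - k) ^ 2 := by
  apply (summable_nat_add_iff k).1
  simpa using hf

lemma shift_sub_tsum_le {f : ℕ → ℝ} (hf : Summable fun n => f n ^ 2) (hf0 : f 0 = 0) (k : ℕ) :
    ∑' n, f (n - k) ^ 2 ≤ ∑' n, f n ^ 2 := by
  have hs := shift_sub_summable hf k
  have h := Summable.sum_add_tsum_nat_add (f := fun n => f (n - k) ^ 2) k hs
  have h2 : ∑ i ∈ Finset.range k, f (i - k) ^ 2 = 0 := by
    apply Finset.sum_eq_zero
    intro i hi
    rw [Finset.mem_range] at hi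
    rw [Nat.sub_eq_zero_of_le (le_of_lt hi), hf0]
    ring
  have h3 : ∀ n : ℕ, f (n + k - k) ^ 2 = f n ^ 2 := fun n => by rw [Nat.add_sub_cancel]
  simp only [h3] at h
  rw [h2, zero_add] at h
  rw [← h]

lemma norm_shellB_le {k₀ : ℝ} (a b : ℝ) (hk : 0 < k₀) (x y : ℕ → ℂ) (n : ℕ) :
    ‖shellB k₀ a b x y n‖ ≤
      |a| * kk k₀ (n + 1) * ‖x (n + 1)‖ * ‖y (n + 2)‖
      + |b| * kk k₀ n * ‖x (n - 1)‖ * ‖y (n + 1)‖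
      + |a| * kk k₀ (n - 1) * ‖x (n - 1)‖ * ‖y (n - 2)‖
      + |b| * kk k₀ (n - 1) * ‖x (n - 2)‖ * ‖y (n - 1)‖ := by
  have nn : ∀ (c : ℝ) (m : ℕ) (p q : ℕ), 0 ≤ |c| * kk k₀ m * ‖x p‖ * ‖y q‖ := fun c m p q =>
    mul_nonneg (mul_nonneg (mul_nonneg (abs_nonneg c) (kk_nonneg hk m)) (norm_nonneg _))
      (norm_nonneg _)
  have nrm : ∀ (c : ℝ) (m : ℕ) (p q : ℕ),
      ‖((c * kk k₀ m : ℝ) : ℂ) * (starRingEnd ℂ) (x p) * (starRingEnd ℂ) (y q)‖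
        = |c| * kk k₀ m * ‖x p‖ * ‖y q‖ := by
    intro c m p q
    rw [norm_mul, norm_mul, Complex.norm_real, Real.norm_eq_abs, abs_mul,
      _root_.abs_of_nonneg (kk_nonneg hk m), RCLike.norm_conj, RCLike.norm_conj]
  unfold shellB
  by_cases hn : n = 0
  · rw [if_pos hn, norm_zero]
    exact add_nonneg (add_nonneg (add_nonneg (nn a _ _ _) (nn b _ _ _)) (nn a _ _ _)) (nn b _ _ _)
  · rw [if_neg hn, norm_mul, Complex.norm_I, one_mul]
    set A := ((a * kk k₀ (n + 1) : ℝ) : ℂ) * (starRingEnd ℂ) (x (n + 1)) * (starRingEnd ℂ) (y (n + 2)) with hA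
    set B := ((b * kk k₀ n : ℝ) : ℂ) * (starRingEnd ℂ) (x (n - 1)) * (starRingEnd ℂ) (y (n + 1)) with hB
    set Cc := ((a * kk k₀ (n - 1) : ℝ) : ℂ) * (starRingEnd ℂ) (x (n - 1)) * (starRingEnd ℂ) (y (n - 2)) with hC
    set D := ((b * kk k₀ (n - 1) : ℝ) : ℂ) * (starRingEnd ℂ) (x (n - 2)) * (starRingEnd ℂ) (y (n - 1)) with hD
    have h1 : ‖A + B - Cc - D‖ ≤ ‖A‖ + ‖B‖ + ‖Cc‖ + ‖D‖ := by
      calc ‖A + B - Cc - D‖ ≤ ‖A + B - Cc‖ + ‖D‖ := norm_sub_le _ _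
        _ ≤ (‖A + B‖ + ‖Cc‖) + ‖D‖ := by gcongr; exact norm_sub_le _ _
        _ ≤ ((‖A‖ + ‖B‖) + ‖Cc‖) + ‖D‖ := by gcongr; exact norm_add_le _ _
        _ = _ := by ring
    rw [nrm, nrm, nrm, nrm] at h1
    exact h1

lemma step3 {c M kp km X Y Z : ℝ} (hc : 0 ≤ c) (hM : 2 * c ≤ M) (hkm : 0 ≤ km)
    (hkp : kp ≤ 2 * km) (hX : 0 ≤ X) (hY : 0 ≤ Y) (hZ : 0 ≤ Z) :
    c * kp * X * Y * Z ≤ M * km * (X * Y * Z) := by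
  have h1 : c * kp ≤ M * km := by
    nlinarith [mul_le_mul_of_nonneg_left hkp hc, mul_nonneg (sub_nonneg.2 hM) hkm]
  have h2 : 0 ≤ X * Y * Z := by positivity
  calc c * kp * X * Y * Z = (c * kp) * (X * Y * Z) := by ring
    _ ≤ (M * km) * (X * Y * Z) := mul_le_mul_of_nonneg_right h1 h2
    _ = _ := by ring

lemma ptw1 {k₀ : ℝ} (a b : ℝ) (hk : 0 < k₀) (u v w : ℕ → ℂ) (n : ℕ) :
    ‖shellB k₀ a b u v n * (starRingEnd ℂ) (w n)‖ ≤ (2 * (|a| + |b|)) *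
      (‖u (n+1)‖ * ‖v (n+2)‖ * (kk k₀ n * ‖w n‖)
      + ‖u (n-1)‖ * ‖v (n+1)‖ * (kk k₀ n * ‖w n‖)
      + ‖u (n-1)‖ * ‖v (n-2)‖ * (kk k₀ n * ‖w n‖)
      + ‖u (n-2)‖ * ‖v (n-1)‖ * (kk k₀ n * ‖w n‖)) := by
  rw [norm_mul, RCLike.norm_conj]
  refine le_trans (mul_le_mul_of_nonneg_right (norm_shellB_le a b hk u v n)
    (norm_nonneg (w n))) ?_
  have hMa : 2 * |a| ≤ 2 * (|a| + |b|) := by linarith [abs_nonneg b]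
  have hMb : 2 * |b| ≤ 2 * (|a| + |b|) := by linarith [abs_nonneg a]
  have h1 := step3 (c := |a|) (kp := kk k₀ (n+1)) (km := kk k₀ n)
    (X := ‖u (n+1)‖) (Y := ‖v (n+2)‖) (Z := ‖w n‖)
    (abs_nonneg a) hMa (kk_nonneg hk n) (le_of_eq (kk_succ k₀ n))
    (norm_nonneg _) (norm_nonneg _) (norm_nonneg _)
  have h2 := step3 (c := |b|) (kp := kk k₀ n) (km := kk k₀ n)
    (X := ‖u (n-1)‖) (Y := ‖v (n+1)‖) (Z := ‖w n‖)
    (abs_nonneg b) hMb (kk_nonneg hk n) (by linarith [kk_nonneg hk n])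
    (norm_nonneg _) (norm_nonneg _) (norm_nonneg _)
  have h3 := step3 (c := |a|) (kp := kk k₀ (n-1)) (km := kk k₀ n)
    (X := ‖u (n-1)‖) (Y := ‖v (n-2)‖) (Z := ‖w n‖)
    (abs_nonneg a) hMa (kk_nonneg hk n) (by linarith [kk_pred_le hk n, kk_nonneg hk n])
    (norm_nonneg _) (norm_nonneg _) (norm_nonneg _)
  have h4 := step3 (c := |b|) (kp := kk k₀ (n-1)) (km := kk k₀ n)
    (X := ‖u (n-2)‖) (Y := ‖v (n-1)‖) (Z := ‖w n‖)
    (abs_nonneg b) hMb (kk_nonneg hk n) (by linarith [kk_pred_le hk n, kk_nonneg hk n])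
    (norm_nonneg _) (norm_nonneg _) (norm_nonneg _)
  nlinarith [h1, h2, h3, h4]

lemma ptw2 {k₀ : ℝ} (a b : ℝ) (hk : 0 < k₀) (u v w : ℕ → ℂ) (n : ℕ) :
    ‖shellB k₀ a b u w n * (starRingEnd ℂ) (v n)‖ ≤ (2 * (|a| + |b|)) *
      (‖u (n+1)‖ * (kk k₀ (n+2) * ‖w (n+2)‖) * ‖v n‖
      + ‖u (n-1)‖ * (kk k₀ (n+1) * ‖w (n+1)‖) * ‖v n‖
      + ‖u (n-1)‖ * (kk k₀ (n-2) * ‖w (n-2)‖) * ‖v n‖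
      + ‖u (n-2)‖ * (kk k₀ (n-1) * ‖w (n-1)‖) * ‖v n‖) := by
  rw [norm_mul, RCLike.norm_conj]
  refine le_trans (mul_le_mul_of_nonneg_right (norm_shellB_le a b hk u w n)
    (norm_nonneg (v n))) ?_
  have hMa : 2 * |a| ≤ 2 * (|a| + |b|) := by linarith [abs_nonneg b]
  have hMb : 2 * |b| ≤ 2 * (|a| + |b|) := by linarith [abs_nonneg a]
  have h1 := step3 (c := |a|) (kp := kk k₀ (n+1)) (km := kk k₀ (n+2))
    (X := ‖u (n+1)‖) (Y := ‖w (n+2)‖) (Z := ‖v n‖)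
    (abs_nonneg a) hMa (kk_nonneg hk (n+2))
    (by linarith [kk_mono hk (Nat.le_succ (n+1)), kk_nonneg hk (n+2)])
    (norm_nonneg _) (norm_nonneg _) (norm_nonneg _)
  have h2 := step3 (c := |b|) (kp := kk k₀ n) (km := kk k₀ (n+1))
    (X := ‖u (n-1)‖) (Y := ‖w (n+1)‖) (Z := ‖v n‖)
    (abs_nonneg b) hMb (kk_nonneg hk (n+1))
    (by linarith [kk_mono hk (Nat.le_succ n), kk_nonneg hk (n+1)])
    (norm_nonneg _) (norm_nonneg _) (norm_nonneg _)
  have e12 : n - 1 - 1 = n - 2 := by omega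
  have h3 := step3 (c := |a|) (kp := kk k₀ (n-1)) (km := kk k₀ (n-2))
    (X := ‖u (n-1)‖) (Y := ‖w (n-2)‖) (Z := ‖v n‖)
    (abs_nonneg a) hMa (kk_nonneg hk (n-2))
    (by have := kk_le_two_mul_pred hk (n-1); rwa [e12] at this)
    (norm_nonneg _) (norm_nonneg _) (norm_nonneg _)
  have h4 := step3 (c := |b|) (kp := kk k₀ (n-1)) (km := kk k₀ (n-1))
    (X := ‖u (n-2)‖) (Y := ‖w (n-1)‖) (Z := ‖v n‖)
    (abs_nonneg b) hMb (kk_nonneg hk (n-1)) (by linarith [kk_nonneg hk (n-1)])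
    (norm_nonneg _) (norm_nonneg _) (norm_nonneg _)
  nlinarith [h1, h2, h3, h4]

lemma ptw3 {k₀ : ℝ} (a b : ℝ) (hk : 0 < k₀) (u v w : ℕ → ℂ) (n : ℕ) :
    ‖shellB k₀ a b w u n * (starRingEnd ℂ) (v n)‖ ≤ (2 * (|a| + |b|)) *
      ((kk k₀ (n+1) * ‖w (n+1)‖) * ‖u (n+2)‖ * ‖v n‖
      + (kk k₀ (n-1) * ‖w (n-1)‖) * ‖u (n+1)‖ * ‖v n‖
      + (kk k₀ (n-1) * ‖w (n-1)‖) * ‖u (n-2)‖ * ‖v n‖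
      + (kk k₀ (n-2) * ‖w (n-2)‖) * ‖u (n-1)‖ * ‖v n‖) := by
  rw [norm_mul, RCLike.norm_conj]
  refine le_trans (mul_le_mul_of_nonneg_right (norm_shellB_le a b hk w u n)
    (norm_nonneg (v n))) ?_
  have hMa : 2 * |a| ≤ 2 * (|a| + |b|) := by linarith [abs_nonneg b]
  have hMb : 2 * |b| ≤ 2 * (|a| + |b|) := by linarith [abs_nonneg a]
  have h1 := step3 (c := |a|) (kp := kk k₀ (n+1)) (km := kk k₀ (n+1))
    (X := ‖w (n+1)‖) (Y := ‖u (n+2)‖) (Z := ‖v n‖)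
    (abs_nonneg a) hMa (kk_nonneg hk (n+1)) (by linarith [kk_nonneg hk (n+1)])
    (norm_nonneg _) (norm_nonneg _) (norm_nonneg _)
  have h2 := step3 (c := |b|) (kp := kk k₀ n) (km := kk k₀ (n-1))
    (X := ‖w (n-1)‖) (Y := ‖u (n+1)‖) (Z := ‖v n‖)
    (abs_nonneg b) hMb (kk_nonneg hk (n-1)) (kk_le_two_mul_pred hk n)
    (norm_nonneg _) (norm_nonneg _) (norm_nonneg _)
  have h3 := step3 (c := |a|) (kp := kk k₀ (n-1)) (km := kk k₀ (n-1))
    (X := ‖w (n-1)‖) (Y := ‖u (n-2)‖) (Z := ‖v n‖)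
    (abs_nonneg a) hMa (kk_nonneg hk (n-1)) (by linarith [kk_nonneg hk (n-1)])
    (norm_nonneg _) (norm_nonneg _) (norm_nonneg _)
  have e12 : n - 1 - 1 = n - 2 := by omega
  have h4 := step3 (c := |b|) (kp := kk k₀ (n-1)) (km := kk k₀ (n-2))
    (X := ‖w (n-2)‖) (Y := ‖u (n-1)‖) (Z := ‖v n‖)
    (abs_nonneg b) hMb (kk_nonneg hk (n-2))
    (by have := kk_le_two_mul_pred hk (n-1); rwa [e12] at this)
    (norm_nonneg _) (norm_nonneg _) (norm_nonneg _)
  nlinarith [h1, h2, h3, h4]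

lemma triple_est {f g h : ℕ → ℝ} {F G H : ℝ}
    (hf0 : ∀ n, 0 ≤ f n) (hg0 : ∀ n, 0 ≤ g n) (hh0 : ∀ n, 0 ≤ h n)
    (hf : Summable fun n => f n ^ 2) (hg : Summable fun n => g n ^ 2)
    (hh : Summable fun n => h n ^ 2)
    (hF : ∑' n, f n ^ 2 ≤ F) (hG : ∑' n, g n ^ 2 ≤ G) (hH : ∑' n, h n ^ 2 ≤ H) :
    Summable (fun n => f n * g n * h n) ∧
      ∑' n, f n * g n * h n ≤ Real.sqrt F * Real.sqrt G * Real.sqrt H := by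
  refine ⟨cs3_summable hf0 hg0 hh0 hf hg hh, (cs3 hf0 hg0 hh0 hf hg hh).trans ?_⟩
  have h1 := Real.sqrt_le_sqrt hF
  have h2 := Real.sqrt_le_sqrt hG
  have h3 := Real.sqrt_le_sqrt hH
  exact mul_le_mul (mul_le_mul h1 h2 (Real.sqrt_nonneg _) (Real.sqrt_nonneg _)) h3
    (Real.sqrt_nonneg _) (mul_nonneg (Real.sqrt_nonneg _) (Real.sqrt_nonneg _))

set_option maxHeartbeats 2000000 in
/-- There is C > 0 such that for u, v ∈ H and w ∈ V:
|⟨B(u,v),w⟩| + |(B(u,w),v)| + |(B(w,u),v)| ≤ C |u|_H |v|_H ‖w‖_V. -/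
theorem stmt10 (k₀ a b : ℝ) (hk₀ : 1 < k₀) :
    ∃ C > (0 : ℝ), ∀ u v w : ℕ → ℂ, u 0 = 0 → v 0 = 0 → w 0 = 0 →
      Summable (fun n => ‖u n‖ ^ 2) → Summable (fun n => ‖v n‖ ^ 2) →
      Summable (fun n => (kk k₀ n) ^ 2 * ‖w n‖ ^ 2) →
      |(∑' n, shellB k₀ a b u v n * (starRingEnd ℂ) (w n)).re| +
        |(∑' n, shellB k₀ a b u w n * (starRingEnd ℂ) (v n)).re| +
        |(∑' n, shellB k₀ a b w u n * (starRingEnd ℂ) (v n)).re| ≤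
      C * Real.sqrt (∑' n, ‖u n‖ ^ 2) * Real.sqrt (∑' n, ‖v n‖ ^ 2) *
        Real.sqrt (∑' n, (kk k₀ n) ^ 2 * ‖w n‖ ^ 2) := by
  have hk : 0 < k₀ := lt_trans one_pos hk₀
  refine ⟨12 * (2 * (|a| + |b|)) + 1, by positivity, ?_⟩
  intro u v w hu0 hv0 hw0 hu hv hw
  set M : ℝ := 2 * (|a| + |b|) with hMdef
  have hM0 : 0 ≤ M := by positivity
  set A : ℝ := ∑' n, ‖u n‖ ^ 2 with hAdef
  set Bv : ℝ := ∑' n, ‖v n‖ ^ 2 with hBdef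
  set Cw : ℝ := ∑' n, (kk k₀ n) ^ 2 * ‖w n‖ ^ 2 with hCdef
  have hw' : Summable fun n => (kk k₀ n * ‖w n‖) ^ 2 := by
    simpa [mul_pow] using hw
  have hCw : ∑' n, (kk k₀ n * ‖w n‖) ^ 2 = Cw := by
    rw [hCdef]; exact tsum_congr fun n => by ring
  -- zero values
  have hU0 : ‖u 0‖ = 0 := by rw [hu0, norm_zero]
  have hV0 : ‖v 0‖ = 0 := by rw [hv0, norm_zero]
  have hW0 : kk k₀ 0 * ‖w 0‖ = 0 := by rw [hw0, norm_zero, mul_zero]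
  -- shifted summability and tsum bounds
  have hup1 : Summable fun n => ‖u (n+1)‖ ^ 2 := shift_add_summable hu 1
  have hup2 : Summable fun n => ‖u (n+2)‖ ^ 2 := shift_add_summable hu 2
  have hum1 : Summable fun n => ‖u (n-1)‖ ^ 2 := shift_sub_summable hu 1
  have hum2 : Summable fun n => ‖u (n-2)‖ ^ 2 := shift_sub_summable hu 2
  have hup1t : ∑' n, ‖u (n+1)‖ ^ 2 ≤ A := shift_add_tsum_le hu 1
  have hup2t : ∑' n, ‖u (n+2)‖ ^ 2 ≤ A := shift_add_tsum_le hu 2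
  have hum1t : ∑' n, ‖u (n-1)‖ ^ 2 ≤ A := shift_sub_tsum_le hu hU0 1
  have hum2t : ∑' n, ‖u (n-2)‖ ^ 2 ≤ A := shift_sub_tsum_le hu hU0 2
  have hvp1 : Summable fun n => ‖v (n+1)‖ ^ 2 := shift_add_summable hv 1
  have hvp2 : Summable fun n => ‖v (n+2)‖ ^ 2 := shift_add_summable hv 2
  have hvm1 : Summable fun n => ‖v (n-1)‖ ^ 2 := shift_sub_summable hv 1
  have hvm2 : Summable fun n => ‖v (n-2)‖ ^ 2 := shift_sub_summable hv 2
  have hvp1t : ∑' n, ‖v (n+1)‖ ^ 2 ≤ Bv := shift_add_tsum_le hv 1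
  have hvp2t : ∑' n, ‖v (n+2)‖ ^ 2 ≤ Bv := shift_add_tsum_le hv 2
  have hvm1t : ∑' n, ‖v (n-1)‖ ^ 2 ≤ Bv := shift_sub_tsum_le hv hV0 1
  have hvm2t : ∑' n, ‖v (n-2)‖ ^ 2 ≤ Bv := shift_sub_tsum_le hv hV0 2
  have hwp1 : Summable fun n => (kk k₀ (n+1) * ‖w (n+1)‖) ^ 2 := shift_add_summable hw' 1
  have hwp2 : Summable fun n => (kk k₀ (n+2) * ‖w (n+2)‖) ^ 2 := shift_add_summable hw' 2
  have hwm1 : Summable fun n => (kk k₀ (n-1) * ‖w (n-1)‖) ^ 2 := shift_sub_summable hw' 1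
  have hwm2 : Summable fun n => (kk k₀ (n-2) * ‖w (n-2)‖) ^ 2 := shift_sub_summable hw' 2
  have hwp1t : ∑' n, (kk k₀ (n+1) * ‖w (n+1)‖) ^ 2 ≤ Cw :=
    (shift_add_tsum_le hw' 1).trans hCw.le
  have hwp2t : ∑' n, (kk k₀ (n+2) * ‖w (n+2)‖) ^ 2 ≤ Cw :=
    (shift_add_tsum_le hw' 2).trans hCw.le
  have hwm1t : ∑' n, (kk k₀ (n-1) * ‖w (n-1)‖) ^ 2 ≤ Cw :=
    (shift_sub_tsum_le hw' hW0 1).trans hCw.le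
  have hwm2t : ∑' n, (kk k₀ (n-2) * ‖w (n-2)‖) ^ 2 ≤ Cw :=
    (shift_sub_tsum_le hw' hW0 2).trans hCw.le
  have hwidt : ∑' n, (kk k₀ n * ‖w n‖) ^ 2 ≤ Cw := hCw.le
  have un : ∀ m : ℕ, (0:ℝ) ≤ ‖u m‖ := fun m => norm_nonneg _
  have vn : ∀ m : ℕ, (0:ℝ) ≤ ‖v m‖ := fun m => norm_nonneg _
  have wn : ∀ m : ℕ, (0:ℝ) ≤ kk k₀ m * ‖w m‖ :=
    fun m => mul_nonneg (kk_nonneg hk m) (norm_nonneg _)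
  -- the twelve triple estimates
  have t11 := triple_est (fun n => un (n+1)) (fun n => vn (n+2)) (fun n => wn n)
    hup1 hvp2 hw' hup1t hvp2t hwidt
  have t12 := triple_est (fun n => un (n-1)) (fun n => vn (n+1)) (fun n => wn n)
    hum1 hvp1 hw' hum1t hvp1t hwidt
  have t13 := triple_est (fun n => un (n-1)) (fun n => vn (n-2)) (fun n => wn n)
    hum1 hvm2 hw' hum1t hvm2t hwidt
  have t14 := triple_est (fun n => un (n-2)) (fun n => vn (n-1)) (fun n => wn n)
    hum2 hvm1 hw' hum2t hvm1t hwidt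
  have t21 := triple_est (fun n => un (n+1)) (fun n => wn (n+2)) (fun n => vn n)
    hup1 hwp2 hv hup1t hwp2t le_rfl
  have t22 := triple_est (fun n => un (n-1)) (fun n => wn (n+1)) (fun n => vn n)
    hum1 hwp1 hv hum1t hwp1t le_rfl
  have t23 := triple_est (fun n => un (n-1)) (fun n => wn (n-2)) (fun n => vn n)
    hum1 hwm2 hv hum1t hwm2t le_rfl
  have t24 := triple_est (fun n => un (n-2)) (fun n => wn (n-1)) (fun n => vn n)
    hum2 hwm1 hv hum2t hwm1t le_rfl
  have t31 := triple_est (fun n => wn (n+1)) (fun n => un (n+2)) (fun n => vn n)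
    hwp1 hup2 hv hwp1t hup2t le_rfl
  have t32 := triple_est (fun n => wn (n-1)) (fun n => un (n+1)) (fun n => vn n)
    hwm1 hup1 hv hwm1t hup1t le_rfl
  have t33 := triple_est (fun n => wn (n-1)) (fun n => un (n-2)) (fun n => vn n)
    hwm1 hum2 hv hwm1t hum2t le_rfl
  have t34 := triple_est (fun n => wn (n-2)) (fun n => un (n-1)) (fun n => vn n)
    hwm2 hum1 hv hwm2t hum1t le_rfl
  -- the three sum estimates
  have sqP : (0:ℝ) ≤ Real.sqrt A * Real.sqrt Bv * Real.sqrt Cw := by positivity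
  have key1 : |(∑' n, shellB k₀ a b u v n * (starRingEnd ℂ) (w n)).re| ≤
      M * (4 * (Real.sqrt A * Real.sqrt Bv * Real.sqrt Cw)) := by
    have hb : ∀ n, ‖shellB k₀ a b u v n * (starRingEnd ℂ) (w n)‖ ≤
        M * (‖u (n+1)‖ * ‖v (n+2)‖ * (kk k₀ n * ‖w n‖)
          + ‖u (n-1)‖ * ‖v (n+1)‖ * (kk k₀ n * ‖w n‖)
          + ‖u (n-1)‖ * ‖v (n-2)‖ * (kk k₀ n * ‖w n‖)
          + ‖u (n-2)‖ * ‖v (n-1)‖ * (kk k₀ n * ‖w n‖)) := fun n => ptw1 a b hk u v w n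
    have hsum : Summable (fun n => ‖u (n+1)‖ * ‖v (n+2)‖ * (kk k₀ n * ‖w n‖)
          + ‖u (n-1)‖ * ‖v (n+1)‖ * (kk k₀ n * ‖w n‖)
          + ‖u (n-1)‖ * ‖v (n-2)‖ * (kk k₀ n * ‖w n‖)
          + ‖u (n-2)‖ * ‖v (n-1)‖ * (kk k₀ n * ‖w n‖)) :=
      ((t11.1.add t12.1).add t13.1).add t14.1
    have hsn : Summable fun n => ‖shellB k₀ a b u v n * (starRingEnd ℂ) (w n)‖ :=
      Summable.of_nonneg_of_le (fun n => norm_nonneg _) hb (hsum.mul_left M)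
    calc |(∑' n, shellB k₀ a b u v n * (starRingEnd ℂ) (w n)).re|
        ≤ ‖∑' n, shellB k₀ a b u v n * (starRingEnd ℂ) (w n)‖ := by
          exact Complex.abs_re_le_norm _
      _ ≤ ∑' n, ‖shellB k₀ a b u v n * (starRingEnd ℂ) (w n)‖ := norm_tsum_le_tsum_norm hsn
      _ ≤ ∑' n, M * (‖u (n+1)‖ * ‖v (n+2)‖ * (kk k₀ n * ‖w n‖)
          + ‖u (n-1)‖ * ‖v (n+1)‖ * (kk k₀ n * ‖w n‖)
          + ‖u (n-1)‖ * ‖v (n-2)‖ * (kk k₀ n * ‖w n‖)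
          + ‖u (n-2)‖ * ‖v (n-1)‖ * (kk k₀ n * ‖w n‖)) :=
          Summable.tsum_le_tsum hb hsn (hsum.mul_left M)
      _ = M * ∑' n, (‖u (n+1)‖ * ‖v (n+2)‖ * (kk k₀ n * ‖w n‖)
          + ‖u (n-1)‖ * ‖v (n+1)‖ * (kk k₀ n * ‖w n‖)
          + ‖u (n-1)‖ * ‖v (n-2)‖ * (kk k₀ n * ‖w n‖)
          + ‖u (n-2)‖ * ‖v (n-1)‖ * (kk k₀ n * ‖w n‖)) := tsum_mul_left
      _ = M * ((∑' n, ‖u (n+1)‖ * ‖v (n+2)‖ * (kk k₀ n * ‖w n‖))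
          + (∑' n, ‖u (n-1)‖ * ‖v (n+1)‖ * (kk k₀ n * ‖w n‖))
          + (∑' n, ‖u (n-1)‖ * ‖v (n-2)‖ * (kk k₀ n * ‖w n‖))
          + (∑' n, ‖u (n-2)‖ * ‖v (n-1)‖ * (kk k₀ n * ‖w n‖))) := by
          rw [Summable.tsum_add ((t11.1.add t12.1).add t13.1) t14.1,
            Summable.tsum_add (t11.1.add t12.1) t13.1, Summable.tsum_add t11.1 t12.1]
      _ ≤ M * (Real.sqrt A * Real.sqrt Bv * Real.sqrt Cw
          + Real.sqrt A * Real.sqrt Bv * Real.sqrt Cw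
          + Real.sqrt A * Real.sqrt Bv * Real.sqrt Cw
          + Real.sqrt A * Real.sqrt Bv * Real.sqrt Cw) :=
          mul_le_mul_of_nonneg_left
            (add_le_add (add_le_add (add_le_add t11.2 t12.2) t13.2) t14.2) hM0
      _ = M * (4 * (Real.sqrt A * Real.sqrt Bv * Real.sqrt Cw)) := by ring
  have key2 : |(∑' n, shellB k₀ a b u w n * (starRingEnd ℂ) (v n)).re| ≤
      M * (4 * (Real.sqrt A * Real.sqrt Cw * Real.sqrt Bv)) := by
    have hb : ∀ n, ‖shellB k₀ a b u w n * (starRingEnd ℂ) (v n)‖ ≤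
        M * (‖u (n+1)‖ * (kk k₀ (n+2) * ‖w (n+2)‖) * ‖v n‖
          + ‖u (n-1)‖ * (kk k₀ (n+1) * ‖w (n+1)‖) * ‖v n‖
          + ‖u (n-1)‖ * (kk k₀ (n-2) * ‖w (n-2)‖) * ‖v n‖
          + ‖u (n-2)‖ * (kk k₀ (n-1) * ‖w (n-1)‖) * ‖v n‖) := fun n => ptw2 a b hk u v w n
    have hsum : Summable (fun n => ‖u (n+1)‖ * (kk k₀ (n+2) * ‖w (n+2)‖) * ‖v n‖
          + ‖u (n-1)‖ * (kk k₀ (n+1) * ‖w (n+1)‖) * ‖v n‖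
          + ‖u (n-1)‖ * (kk k₀ (n-2) * ‖w (n-2)‖) * ‖v n‖
          + ‖u (n-2)‖ * (kk k₀ (n-1) * ‖w (n-1)‖) * ‖v n‖) :=
      ((t21.1.add t22.1).add t23.1).add t24.1
    have hsn : Summable fun n => ‖shellB k₀ a b u w n * (starRingEnd ℂ) (v n)‖ :=
      Summable.of_nonneg_of_le (fun n => norm_nonneg _) hb (hsum.mul_left M)
    calc |(∑' n, shellB k₀ a b u w n * (starRingEnd ℂ) (v n)).re|
        ≤ ‖∑' n, shellB k₀ a b u w n * (starRingEnd ℂ) (v n)‖ := by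
          exact Complex.abs_re_le_norm _
      _ ≤ ∑' n, ‖shellB k₀ a b u w n * (starRingEnd ℂ) (v n)‖ := norm_tsum_le_tsum_norm hsn
      _ ≤ ∑' n, M * (‖u (n+1)‖ * (kk k₀ (n+2) * ‖w (n+2)‖) * ‖v n‖
          + ‖u (n-1)‖ * (kk k₀ (n+1) * ‖w (n+1)‖) * ‖v n‖
          + ‖u (n-1)‖ * (kk k₀ (n-2) * ‖w (n-2)‖) * ‖v n‖
          + ‖u (n-2)‖ * (kk k₀ (n-1) * ‖w (n-1)‖) * ‖v n‖) :=
          Summable.tsum_le_tsum hb hsn (hsum.mul_left M)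
      _ = M * ∑' n, (‖u (n+1)‖ * (kk k₀ (n+2) * ‖w (n+2)‖) * ‖v n‖
          + ‖u (n-1)‖ * (kk k₀ (n+1) * ‖w (n+1)‖) * ‖v n‖
          + ‖u (n-1)‖ * (kk k₀ (n-2) * ‖w (n-2)‖) * ‖v n‖
          + ‖u (n-2)‖ * (kk k₀ (n-1) * ‖w (n-1)‖) * ‖v n‖) := tsum_mul_left
      _ = M * ((∑' n, ‖u (n+1)‖ * (kk k₀ (n+2) * ‖w (n+2)‖) * ‖v n‖)
          + (∑' n, ‖u (n-1)‖ * (kk k₀ (n+1) * ‖w (n+1)‖) * ‖v n‖)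
          + (∑' n, ‖u (n-1)‖ * (kk k₀ (n-2) * ‖w (n-2)‖) * ‖v n‖)
          + (∑' n, ‖u (n-2)‖ * (kk k₀ (n-1) * ‖w (n-1)‖) * ‖v n‖)) := by
          rw [Summable.tsum_add ((t21.1.add t22.1).add t23.1) t24.1,
            Summable.tsum_add (t21.1.add t22.1) t23.1, Summable.tsum_add t21.1 t22.1]
      _ ≤ M * (Real.sqrt A * Real.sqrt Cw * Real.sqrt Bv
          + Real.sqrt A * Real.sqrt Cw * Real.sqrt Bv
          + Real.sqrt A * Real.sqrt Cw * Real.sqrt Bv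
          + Real.sqrt A * Real.sqrt Cw * Real.sqrt Bv) :=
          mul_le_mul_of_nonneg_left
            (add_le_add (add_le_add (add_le_add t21.2 t22.2) t23.2) t24.2) hM0
      _ = M * (4 * (Real.sqrt A * Real.sqrt Cw * Real.sqrt Bv)) := by ring
  have key3 : |(∑' n, shellB k₀ a b w u n * (starRingEnd ℂ) (v n)).re| ≤
      M * (4 * (Real.sqrt Cw * Real.sqrt A * Real.sqrt Bv)) := by
    have hb : ∀ n, ‖shellB k₀ a b w u n * (starRingEnd ℂ) (v n)‖ ≤
        M * ((kk k₀ (n+1) * ‖w (n+1)‖) * ‖u (n+2)‖ * ‖v n‖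
          + (kk k₀ (n-1) * ‖w (n-1)‖) * ‖u (n+1)‖ * ‖v n‖
          + (kk k₀ (n-1) * ‖w (n-1)‖) * ‖u (n-2)‖ * ‖v n‖
          + (kk k₀ (n-2) * ‖w (n-2)‖) * ‖u (n-1)‖ * ‖v n‖) := fun n => ptw3 a b hk u v w n
    have hsum : Summable (fun n => (kk k₀ (n+1) * ‖w (n+1)‖) * ‖u (n+2)‖ * ‖v n‖
          + (kk k₀ (n-1) * ‖w (n-1)‖) * ‖u (n+1)‖ * ‖v n‖
          + (kk k₀ (n-1) * ‖w (n-1)‖) * ‖u (n-2)‖ * ‖v n‖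
          + (kk k₀ (n-2) * ‖w (n-2)‖) * ‖u (n-1)‖ * ‖v n‖) :=
      ((t31.1.add t32.1).add t33.1).add t34.1
    have hsn : Summable fun n => ‖shellB k₀ a b w u n * (starRingEnd ℂ) (v n)‖ :=
      Summable.of_nonneg_of_le (fun n => norm_nonneg _) hb (hsum.mul_left M)
    calc |(∑' n, shellB k₀ a b w u n * (starRingEnd ℂ) (v n)).re|
        ≤ ‖∑' n, shellB k₀ a b w u n * (starRingEnd ℂ) (v n)‖ := by
          exact Complex.abs_re_le_norm _
      _ ≤ ∑' n, ‖shellB k₀ a b w u n * (starRingEnd ℂ) (v n)‖ := norm_tsum_le_tsum_norm hsn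
      _ ≤ ∑' n, M * ((kk k₀ (n+1) * ‖w (n+1)‖) * ‖u (n+2)‖ * ‖v n‖
          + (kk k₀ (n-1) * ‖w (n-1)‖) * ‖u (n+1)‖ * ‖v n‖
          + (kk k₀ (n-1) * ‖w (n-1)‖) * ‖u (n-2)‖ * ‖v n‖
          + (kk k₀ (n-2) * ‖w (n-2)‖) * ‖u (n-1)‖ * ‖v n‖) :=
          Summable.tsum_le_tsum hb hsn (hsum.mul_left M)
      _ = M * ∑' n, ((kk k₀ (n+1) * ‖w (n+1)‖) * ‖u (n+2)‖ * ‖v n‖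
          + (kk k₀ (n-1) * ‖w (n-1)‖) * ‖u (n+1)‖ * ‖v n‖
          + (kk k₀ (n-1) * ‖w (n-1)‖) * ‖u (n-2)‖ * ‖v n‖
          + (kk k₀ (n-2) * ‖w (n-2)‖) * ‖u (n-1)‖ * ‖v n‖) := tsum_mul_left
      _ = M * ((∑' n, (kk k₀ (n+1) * ‖w (n+1)‖) * ‖u (n+2)‖ * ‖v n‖)
          + (∑' n, (kk k₀ (n-1) * ‖w (n-1)‖) * ‖u (n+1)‖ * ‖v n‖)
          + (∑' n, (kk k₀ (n-1) * ‖w (n-1)‖) * ‖u (n-2)‖ * ‖v n‖)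
          + (∑' n, (kk k₀ (n-2) * ‖w (n-2)‖) * ‖u (n-1)‖ * ‖v n‖)) := by
          rw [Summable.tsum_add ((t31.1.add t32.1).add t33.1) t34.1,
            Summable.tsum_add (t31.1.add t32.1) t33.1, Summable.tsum_add t31.1 t32.1]
      _ ≤ M * (Real.sqrt Cw * Real.sqrt A * Real.sqrt Bv
          + Real.sqrt Cw * Real.sqrt A * Real.sqrt Bv
          + Real.sqrt Cw * Real.sqrt A * Real.sqrt Bv
          + Real.sqrt Cw * Real.sqrt A * Real.sqrt Bv) :=
          mul_le_mul_of_nonneg_left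
            (add_le_add (add_le_add (add_le_add t31.2 t32.2) t33.2) t34.2) hM0
      _ = M * (4 * (Real.sqrt Cw * Real.sqrt A * Real.sqrt Bv)) := by ring
  calc |(∑' n, shellB k₀ a b u v n * (starRingEnd ℂ) (w n)).re| +
        |(∑' n, shellB k₀ a b u w n * (starRingEnd ℂ) (v n)).re| +
        |(∑' n, shellB k₀ a b w u n * (starRingEnd ℂ) (v n)).re|
      ≤ M * (4 * (Real.sqrt A * Real.sqrt Bv * Real.sqrt Cw))
        + M * (4 * (Real.sqrt A * Real.sqrt Cw * Real.sqrt Bv))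
        + M * (4 * (Real.sqrt Cw * Real.sqrt A * Real.sqrt Bv)) :=
        add_le_add (add_le_add key1 key2) key3
    _ = 12 * M * (Real.sqrt A * Real.sqrt Bv * Real.sqrt Cw) := by ring
    _ ≤ (12 * M + 1) * Real.sqrt A * Real.sqrt Bv * Real.sqrt Cw := by nlinarith [sqP]
end
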